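/- arXiv:2312.12035 — 3 statements merged into one kernel-verified Lean document; each statement's English description precedes it below -/
import Mathlib

section
/- Let n ≥ 2 be even, k = n/2, and let b ∈ ℚ^n be such that for every k-element subset I of {1,...,n}, the sum Σ_{i∈I} b_i lies in {0, 1}. If Σ_{i∈I} b_i = 0 for some k-subset I and also Σ_{i∉I} b_i = 0 for the complementary subset, then b = 0. -/
/-!
Exchanging `i ∈ I` for `j ∉ I` gives a `k`-subset with sum `b j - b i`, which is `0` or `1`,
so `b i ≤ b j`. Summed over all such pairs these differences give
`#I • ∑ j ∈ Iᶜ, b j - #Iᶜ • ∑ i ∈ I, b i = 0`, so each of them vanishes: `b` is constant,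
and as it sums to zero over the nonempty set `I`, it is zero.
-/

open Finset

namespace Finset

variable {α M : Type*} [DecidableEq α] [AddCommGroup M]

theorem sum_insert_erase_of_mem_of_notMem {s : Finset α} {i j : α} (hi : i ∈ s) (hj : j ∉ s)
    (f : α → M) : ∑ x ∈ insert j (s.erase i), f x = ∑ x ∈ s, f x + f j - f i := by
  rw [sum_insert fun h ↦ hj (mem_of_mem_erase h), sum_erase_eq_sub hi]
  abel

theorem card_insert_erase_of_mem_of_notMem {s : Finset α} {i j : α} (hi : i ∈ s) (hj : j ∉ s) :
    #(insert j (s.erase i)) = #s := by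
  rw [card_insert_of_notMem fun h ↦ hj (mem_of_mem_erase h), card_erase_add_one hi]

end Finset

section

variable {α M : Type*} [Fintype α] [DecidableEq α] [AddCommGroup M] [LinearOrder M]
  [IsOrderedAddMonoid M] {s : Finset α} {b : α → M}

theorem eq_of_le_of_sum_eq_zero_of_sum_compl_eq_zero (hs : ∑ i ∈ s, b i = 0)
    (hsc : ∑ j ∈ sᶜ, b j = 0) (hle : ∀ i ∈ s, ∀ j ∉ s, b i ≤ b j) :
    ∀ i ∈ s, ∀ j ∉ s, b i = b j := by
  have htotal : ∑ i ∈ s, ∑ j ∈ sᶜ, (b j - b i) = 0 := by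
    simp only [sum_sub_distrib, sum_const, hsc, zero_sub, sum_neg_distrib, ← smul_sum, hs,
      smul_zero, neg_zero]
  have hnonneg : ∀ i ∈ s, 0 ≤ ∑ j ∈ sᶜ, (b j - b i) := fun i hi ↦
    sum_nonneg fun j hj ↦ sub_nonneg.2 (hle i hi j (mem_compl.1 hj))
  intro i hi j hj
  have hrow := (sum_eq_zero_iff_of_nonneg hnonneg).1 htotal i hi
  have hentry := (sum_eq_zero_iff_of_nonneg fun j hj ↦
    sub_nonneg.2 (hle i hi j (mem_compl.1 hj))).1 hrow j (mem_compl.2 hj)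
  exact (sub_eq_zero.1 hentry).symm

theorem eq_zero_of_le_of_sum_eq_zero_of_sum_compl_eq_zero (hne : s.Nonempty)
    (hcne : sᶜ.Nonempty) (hs : ∑ i ∈ s, b i = 0) (hsc : ∑ j ∈ sᶜ, b j = 0)
    (hle : ∀ i ∈ s, ∀ j ∉ s, b i ≤ b j) : b = 0 := by
  have heq := eq_of_le_of_sum_eq_zero_of_sum_compl_eq_zero hs hsc hle
  funext x
  by_cases hx : x ∈ s
  · have : #sᶜ • b x = 0 := by
      rw [← hsc, ← sum_const]
      exact sum_congr rfl fun j hj ↦ heq x hx j (mem_compl.1 hj)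
    exact (nsmul_eq_zero_iff_right hcne.card_pos.ne').1 this
  · have : #s • b x = 0 := by
      rw [← hs, ← sum_const]
      exact sum_congr rfl fun i hi ↦ (heq i hi x hx).symm
    exact (nsmul_eq_zero_iff_right hne.card_pos.ne').1 this

end

theorem stmt_14_general (n : ℕ) (hn : 2 ≤ n) (k : ℕ) (hk : k = n / 2)
    (b : Fin n → ℚ)
    (hb : ∀ I : Finset (Fin n), I.card = k →
      ∑ i ∈ I, b i = 0 ∨ ∑ i ∈ I, b i = 1)
    (I : Finset (Fin n)) (hI : I.card = k)
    (hI0 : ∑ i ∈ I, b i = 0) (hIc0 : ∑ i ∈ Iᶜ, b i = 0) :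
    b = 0 := by
  have hne : I.Nonempty := card_pos.1 (by omega)
  have hcne : Iᶜ.Nonempty := card_pos.1 (by rw [card_compl, Fintype.card_fin]; omega)
  refine eq_zero_of_le_of_sum_eq_zero_of_sum_compl_eq_zero hne hcne hI0 hIc0 fun i hi j hj ↦ ?_
  have hswap := hb _ ((card_insert_erase_of_mem_of_notMem hi hj).trans hI)
  rw [sum_insert_erase_of_mem_of_notMem hi hj, hI0, zero_add] at hswap
  rcases hswap with h | h <;> linarith

theorem stmt_14 (n : ℕ) (hn : 2 ≤ n) (hev : Even n) (k : ℕ) (hk : k = n / 2)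
    (b : Fin n → ℚ)
    (hb : ∀ I : Finset (Fin n), I.card = k →
      ∑ i ∈ I, b i = 0 ∨ ∑ i ∈ I, b i = 1)
    (I : Finset (Fin n)) (hI : I.card = k)
    (hI0 : ∑ i ∈ I, b i = 0) (hIc0 : ∑ i ∈ Iᶜ, b i = 0) :
    b = 0 :=
  stmt_14_general n hn k hk b hb I hI hI0 hIc0
end

section
/- Let p ≥ 2 and let b ∈ ℚ^{p+1} be a vector such that for every (p+1)/2-element subset I of {1,...,p+1} (where p is odd), Σ_{i∈I} b_i ∈ {0,1}, and suppose Σ_{i∈I} b_i = 1 and Σ_{i∉I} b_i = 1 for some such subset I and its complement. Then b is the constant vector with all entries 2/(p+1). -/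
/-!
The two sums over `I` and `Iᶜ` give total mass `2`. Since a half-size subset and its
complement have sums in `{0, 1}` adding up to `2`, every half-size subset sums to `1`.
Swapping one element of a half-size subset for one outside it then shows that any two
entries of `b` agree, and `(p + 1) / 2` equal entries summing to `1` are each `2 / (p + 1)`.
-/

open Finset

variable {ι : Type*} [Fintype ι] [DecidableEq ι]

theorem Finset.apply_eq_of_sum_eq_of_card_eq {M : Type*} [AddCancelCommMonoid M]
    {m : ℕ} (hm : 0 < m) (hmι : m < Fintype.card ι) (f : ι → M) (c : M)
    (hf : ∀ s : Finset ι, s.card = m → ∑ i ∈ s, f i = c) (i j : ι) : f i = f j := by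
  obtain rfl | hij := eq_or_ne i j
  · rfl
  have hcard : m - 1 ≤ (univ \ {i, j}).card := by
    rw [card_sdiff_of_subset (subset_univ _), card_pair hij, card_univ]
    omega
  obtain ⟨K, hKsub, hKcard⟩ := exists_subset_card_eq hcard
  have hiK : i ∉ K := fun h => by simpa using hKsub h
  have hjK : j ∉ K := fun h => by simpa using hKsub h
  have hi : f i + ∑ x ∈ K, f x = c := by
    rw [← sum_insert hiK]
    exact hf _ (by rw [card_insert_of_notMem hiK, hKcard]; omega)
  have hj : f j + ∑ x ∈ K, f x = c := by
    rw [← sum_insert hjK]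
    exact hf _ (by rw [card_insert_of_notMem hjK, hKcard]; omega)
  exact add_right_cancel (hi.trans hj.symm)

theorem Finset.sum_eq_one_of_card_eq_half {R : Type*} [AddCommMonoidWithOne R] [CharZero R]
    {m : ℕ} (hι : Fintype.card ι = 2 * m) (f : ι → R) (htotal : ∑ i, f i = 2)
    (hf : ∀ s : Finset ι, s.card = m → ∑ i ∈ s, f i = 0 ∨ ∑ i ∈ s, f i = 1)
    (s : Finset ι) (hs : s.card = m) : ∑ i ∈ s, f i = 1 := by
  have hsc : sᶜ.card = m := by rw [card_compl, hι, hs]; omega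
  have hsplit : ∑ i ∈ s, f i + ∑ i ∈ sᶜ, f i = 2 := by rwa [sum_add_sum_compl]
  rcases hf s hs with h | h
  · rcases hf sᶜ hsc with h' | h' <;> rw [h, h'] at hsplit <;> norm_num at hsplit
  · exact h

theorem stmt_15_general (p : ℕ) (hodd : Odd p)
    (b : Fin (p + 1) → ℚ)
    (hb : ∀ I : Finset (Fin (p + 1)), I.card = (p + 1) / 2 →
      ∑ i ∈ I, b i = 0 ∨ ∑ i ∈ I, b i = 1)
    (I : Finset (Fin (p + 1))) (hI : I.card = (p + 1) / 2)
    (hI1 : ∑ i ∈ I, b i = 1) (hIc1 : ∑ i ∈ Iᶜ, b i = 1) :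
    ∀ i, b i = 2 / ((p : ℚ) + 1) := by
  obtain ⟨k, rfl⟩ := hodd
  have hhalf : (2 * k + 1 + 1) / 2 = k + 1 := by omega
  rw [hhalf] at hb hI
  have htotal : ∑ i, b i = 2 := by
    rw [← sum_add_sum_compl I, hI1, hIc1]; norm_num
  have hall := sum_eq_one_of_card_eq_half (m := k + 1) (by rw [Fintype.card_fin]; ring) b htotal hb
  have hconst := apply_eq_of_sum_eq_of_card_eq k.succ_pos (by rw [Fintype.card_fin]; omega) b 1 hall
  intro i
  have hIi : ((k : ℚ) + 1) * b i = 1 :=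
    calc ((k : ℚ) + 1) * b i = ∑ x ∈ I, b x := by
          rw [sum_congr rfl fun x _ => hconst x i, sum_const, hI, nsmul_eq_mul]; push_cast; rfl
      _ = 1 := hI1
  push_cast
  field_simp
  linarith

theorem stmt_15 (p : ℕ) (hp : 2 ≤ p) (hodd : Odd p)
    (b : Fin (p + 1) → ℚ)
    (hb : ∀ I : Finset (Fin (p + 1)), I.card = (p + 1) / 2 →
      ∑ i ∈ I, b i = 0 ∨ ∑ i ∈ I, b i = 1)
    (I : Finset (Fin (p + 1))) (hI : I.card = (p + 1) / 2)
    (hI1 : ∑ i ∈ I, b i = 1) (hIc1 : ∑ i ∈ Iᶜ, b i = 1) :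
    ∀ i, b i = 2 / ((p : ℚ) + 1) :=
  stmt_15_general p hodd b hb I hI hI1 hIc1
end

section
/- Let q ≥ 2 and let C be a set of q² functions (codewords) from Fin (q+1) to Fin q such that any two distinct codewords agree in exactly one coordinate. Then for every pair of distinct coordinates i ≠ j, the map C → Fin q × Fin q sending a codeword c to (c(i), c(j)) is a bijection. -/
theorem stmt_16 (q : ℕ) (hq : 2 ≤ q)
    (C : Finset (Fin (q + 1) → Fin q))
    (hcard : C.card = q ^ 2)
    (hagree : ∀ c ∈ C, ∀ d ∈ C, c ≠ d →
      (Finset.univ.filter fun i => c i = d i).card = 1) :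
    ∀ i j : Fin (q + 1), i ≠ j →
      Function.Bijective (fun c : {x // x ∈ C} => (c.1 i, c.1 j)) := by
  intro i j hij
  have hinj : Function.Injective (fun c : {x // x ∈ C} => (c.1 i, c.1 j)) := by
    rintro ⟨c, hc⟩ ⟨d, hd⟩ h
    simp only [Prod.mk.injEq] at h
    ext1
    by_contra hne
    have h1 := hagree c hc d hd hne
    have hsub : ({i, j} : Finset _) ⊆ Finset.univ.filter fun k => c k = d k := by
      intro k hk
      simp only [Finset.mem_insert, Finset.mem_singleton] at hk
      simp only [Finset.mem_filter, Finset.mem_univ, true_and]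
      rcases hk with rfl | rfl
      · exact h.1
      · exact h.2
    have h2 : 2 ≤ (Finset.univ.filter fun k => c k = d k).card := by
      calc 2 = ({i, j} : Finset _).card := (Finset.card_pair hij).symm
        _ ≤ _ := Finset.card_le_card hsub
    omega
  have hcard2 : Fintype.card {x // x ∈ C} = Fintype.card (Fin q × Fin q) := by
    simp [Fintype.card_coe, hcard, sq]
  exact (Fintype.bijective_iff_injective_and_card _).2 ⟨hinj, hcard2⟩
end
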